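/- Fix demands Q : W → ℝ with Q_ij > 0 for all ij ∈ W, and let Λ₀ be the set of path-flow vectors h with ∑_{p : w(p)=ij} ∫_{t0}^{tf} h_p(t) dt = Q_ij for all ij ∈ W. For h* ∈ Λ₀ define v_p(h*) = essinf{Ψ_p(t, h*) : t ∈ [t0, tf]} and v_ij(h*) = min{v_p(h*) : w(p) = ij}. Then h* ∈ Λ₀ is a dynamic user equilibrium — i.e. for every ij ∈ W and every p with w(p)=ij: for a.e. t ∈ [t0, tf], h*_p(t) > 0 implies Ψ_p(t, h*) = v_ij(h*), and for a.e. t ∈ [t0, tf], Ψ_p(t, h*) ≥ v_ij(h*) — if and only if h* solves the fixed-demand variational inequality: ∑_{p∈P} ∫_{t0}^{tf} Ψ_p(t, h*)(h_p(t) − h*_p(t)) dt ≥ 0 for all h ∈ Λ₀. (Fixed-demand DUE/VI equivalence of Friesz et al. (1993), as stated in Section 2 and used in the proof of Theorem 3.1.) -/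

import Mathlib

open MeasureTheory Set

/-- A path-flow vector: each `h p` is measurable, a.e. nonnegative on `[t0, tf]`,
and square-integrable on `[t0, tf]`. -/
def IsPathFlow {P : Type*} (t0 tf : ℝ) (h : P → ℝ → ℝ) : Prop :=
  ∀ p, Measurable (h p) ∧
    (∀ᵐ t ∂(volume.restrict (Icc t0 tf)), 0 ≤ h p t) ∧
    MemLp (h p) 2 (volume.restrict (Icc t0 tf))

/-- The essential infimum of `g` over `[t0, tf]`:
`sup { x : ℝ | ν{t ∈ [t0, tf] : g t < x} = 0 }`. -/
noncomputable def essinfOn (t0 tf : ℝ) (g : ℝ → ℝ) : ℝ :=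
  sSup {x : ℝ | volume {t ∈ Icc t0 tf | g t < x} = 0}

/-- The minimal essential-infimum effective delay over paths connecting OD pair `ij`:
`v_ij = min { essinf Ψ_p(·, h) : w p = ij }`. -/
noncomputable def vMin {P W : Type*} (t0 tf : ℝ) (w : P → W) (Ψp : P → ℝ → ℝ)
    (ij : W) : ℝ :=
  sInf {x : ℝ | ∃ p, w p = ij ∧ essinfOn t0 tf (Ψp p) = x}

/-!
Let `v_p` be the minimal delay of the OD pair of `p`. If `h*` is a dynamic user equilibrium,
then for every feasible `h` we have `∫ Ψ_p (h_p - h*_p) ≥ v_p (∫ h_p - ∫ h*_p)`, because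
`Ψ_p ≥ v_p` a.e. and `Ψ_p = v_p` wherever `h*_p > 0`. Summing over paths, the right-hand sides
cancel within each OD pair since `h` and `h*` satisfy the same demands.

Conversely, `Ψ_p ≥ essinf Ψ_p ≥ v_p` a.e. for any `h*`, so only complementarity needs the VI.
Suppose `h*_p ≥ r` and `Ψ_p ≥ v_p + r` on a non-null set `A`, and let `q` be a path of the same
OD pair with essential infimum `v_p`, so that `Ψ_q < v_p + r` on a non-null set `B`. Removing
flow `r` from `p` on `A` and spreading the same mass uniformly over `B` on `q` keeps every demand,
so the VI forces the average of `Ψ_p` over `A` to be at most the average of `Ψ_q` over `B`, which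
is absurd.
-/

section EssinfOn

variable {t0 tf m x : ℝ} {g : ℝ → ℝ}

lemma volume_sep_lt_eq_zero_iff :
    volume {t ∈ Icc t0 tf | g t < x} = 0 ↔ ∀ᵐ t ∂volume.restrict (Icc t0 tf), x ≤ g t := by
  rw [ae_iff, Measure.restrict_apply' measurableSet_Icc, inter_comm]
  simp only [not_le]
  rfl

lemma bddAbove_essinfOn_set (ht : t0 < tf) :
    BddAbove {x | volume {t ∈ Icc t0 tf | g t < x} = 0} := by
  by_contra hS
  have hall : ∀ᵐ t ∂volume.restrict (Icc t0 tf), ∀ n : ℕ, (n : ℝ) ≤ g t :=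
    ae_all_iff.2 fun n => by
      obtain ⟨x, hx, hnx⟩ := not_bddAbove_iff.1 hS n
      exact (volume_sep_lt_eq_zero_iff.1 hx).mono fun t ht => hnx.le.trans ht
  have : NeZero (volume.restrict (Icc t0 tf)) := ⟨by simpa using ht⟩
  obtain ⟨t, ht⟩ := hall.exists
  obtain ⟨n, hn⟩ := exists_nat_gt (g t)
  exact (ht n).not_gt hn

lemma ae_le_of_lt_essinfOn (hm : ∀ᵐ t ∂volume.restrict (Icc t0 tf), m ≤ g t)
    (hx : x < essinfOn t0 tf g) : ∀ᵐ t ∂volume.restrict (Icc t0 tf), x ≤ g t := by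
  obtain ⟨y, hy, hxy⟩ := exists_lt_of_lt_csSup ⟨m, volume_sep_lt_eq_zero_iff.2 hm⟩ hx
  exact (volume_sep_lt_eq_zero_iff.1 hy).mono fun t ht => hxy.le.trans ht

lemma ae_essinfOn_le (hm : ∀ᵐ t ∂volume.restrict (Icc t0 tf), m ≤ g t) :
    ∀ᵐ t ∂volume.restrict (Icc t0 tf), essinfOn t0 tf g ≤ g t := by
  have hall : ∀ᵐ t ∂volume.restrict (Icc t0 tf),
      ∀ n : ℕ, essinfOn t0 tf g - 1 / (n + 1) ≤ g t :=
    ae_all_iff.2 fun n => ae_le_of_lt_essinfOn hm (sub_lt_self _ Nat.one_div_pos_of_nat)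
  have hlim : Filter.Tendsto (fun n : ℕ => essinfOn t0 tf g - 1 / (n + 1)) Filter.atTop
      (nhds (essinfOn t0 tf g - 0)) :=
    tendsto_const_nhds.sub tendsto_one_div_add_atTop_nhds_zero_nat
  filter_upwards [hall] with t ht
  exact le_of_tendsto' (by simpa using hlim) ht

lemma measure_lt_ne_zero_of_essinfOn_lt (ht : t0 < tf) (hx : essinfOn t0 tf g < x) :
    volume.restrict (Icc t0 tf) {t | g t < x} ≠ 0 := by
  intro h0
  have hmem : volume {t ∈ Icc t0 tf | g t < x} = 0 :=
    volume_sep_lt_eq_zero_iff.2 (ae_iff.2 (by simpa using h0))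
  exact (le_csSup (bddAbove_essinfOn_set ht) hmem).not_gt hx

end EssinfOn

section VMin

variable {P W : Type*} [Finite P] {t0 tf : ℝ} (w : P → W) (c : P → ℝ → ℝ)

lemma finite_vMin_set (ij : W) : {x | ∃ p, w p = ij ∧ essinfOn t0 tf (c p) = x}.Finite :=
  (finite_range fun p => essinfOn t0 tf (c p)).subset <| by
    rintro _ ⟨p, -, rfl⟩
    exact mem_range_self p

lemma vMin_le_essinfOn (p : P) : vMin t0 tf w c (w p) ≤ essinfOn t0 tf (c p) :=
  csInf_le (finite_vMin_set w c _).bddBelow ⟨p, rfl, rfl⟩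

lemma exists_essinfOn_eq_vMin (p : P) :
    ∃ q, w q = w p ∧ essinfOn t0 tf (c q) = vMin t0 tf w c (w p) := by
  have hne : {x | ∃ q, w q = w p ∧ essinfOn t0 tf (c q) = x}.Nonempty := ⟨_, p, rfl, rfl⟩
  exact hne.csInf_mem (finite_vMin_set w c _)

lemma ae_vMin_le {m : P → ℝ} (hc : ∀ p, ∀ᵐ t ∂volume.restrict (Icc t0 tf), m p ≤ c p t)
    (p : P) : ∀ᵐ t ∂volume.restrict (Icc t0 tf), vMin t0 tf w c (w p) ≤ c p t :=
  (ae_essinfOn_le (hc p)).mono fun _ ht => (vMin_le_essinfOn w c p).trans ht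

end VMin

lemma Finset.sum_comp_mul_sub_eq_zero {P W : Type*} [Fintype P] [DecidableEq W] (w : P → W)
    (v : W → ℝ) {a b : P → ℝ}
    (hab : ∀ ij, ∑ p ∈ univ.filter (fun p => w p = ij), a p
      = ∑ p ∈ univ.filter (fun p => w p = ij), b p) :
    ∑ p, v (w p) * (a p - b p) = 0 := by
  rw [← sum_fiberwise_of_maps_to (t := univ.image w) (fun p _ => mem_image_of_mem w (mem_univ p))]
  refine sum_eq_zero fun ij _ => ?_
  rw [sum_congr rfl fun p hp => by rw [(mem_filter.1 hp).2], ← mul_sum, sum_sub_distrib, hab,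
    sub_self, mul_zero]

lemma mul_sub_integral_le_integral_mul_sub {α : Type*} [MeasurableSpace α] {μ : Measure α}
    [IsFiniteMeasure μ] {f h h' : α → ℝ} {v : ℝ} (hf : MemLp f 2 μ) (hh : MemLp h 2 μ)
    (hh' : MemLp h' 2 μ) (hvf : ∀ᵐ a ∂μ, v ≤ f a) (hh0 : ∀ᵐ a ∂μ, 0 ≤ h a)
    (hh'0 : ∀ᵐ a ∂μ, 0 ≤ h' a) (hcompl : ∀ᵐ a ∂μ, 0 < h' a → f a = v) :
    v * (∫ a, h a ∂μ - ∫ a, h' a ∂μ) ≤ ∫ a, f a * (h a - h' a) ∂μ := by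
  have hint : ∀ {g : α → ℝ}, MemLp g 2 μ → Integrable (fun a => (f a - v) * g a) μ :=
    fun hg => (hf.sub (memLp_const v)).integrable_mul hg
  have hi := hh.integrable one_le_two
  have hi' := hh'.integrable one_le_two
  have hslack : ∫ a, (f a - v) * h' a ∂μ = 0 := integral_eq_zero_of_ae <| by
    filter_upwards [hh'0, hcompl] with a h0 hc
    rcases h0.eq_or_lt with h0 | h0
    · simp [← h0]
    · simp [hc h0]
  have hgain : 0 ≤ ∫ a, (f a - v) * h a ∂μ := integral_nonneg_of_ae <| by
    filter_upwards [hvf, hh0] with a h1 h2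
    exact mul_nonneg (sub_nonneg.2 h1) h2
  have hsplitI : Integrable (fun a => (f a - v) * h a - (f a - v) * h' a) μ :=
    (hint hh).sub (hint hh')
  have hshiftI : Integrable (fun a => v * (h a - h' a)) μ := (hi.sub hi').const_mul v
  have hsplit : ∫ a, f a * (h a - h' a) ∂μ
      = ∫ a, (f a - v) * h a ∂μ - ∫ a, (f a - v) * h' a ∂μ
        + v * (∫ a, h a ∂μ - ∫ a, h' a ∂μ) :=
    calc ∫ a, f a * (h a - h' a) ∂μ
        = ∫ a, ((f a - v) * h a - (f a - v) * h' a) + v * (h a - h' a) ∂μ := by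
          congr 1; ext a; ring
      _ = _ := by
          rw [integral_add hsplitI hshiftI, integral_sub (hint hh) (hint hh'),
            integral_const_mul, integral_sub hi hi']
  linarith

lemma exists_measure_setOf_le_and_add_le_ne_zero {α : Type*} [MeasurableSpace α]
    {μ : Measure α} {f g : α → ℝ} {b : ℝ} (h : μ {x | 0 < f x ∧ b < g x} ≠ 0) :
    ∃ r > 0, μ {x | r ≤ f x ∧ b + r ≤ g x} ≠ 0 := by
  by_contra! hr
  refine h (measure_mono_null ?_ (measure_iUnion_null fun n : ℕ =>
    hr (1 / (n + 1)) Nat.one_div_pos_of_nat))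
  rintro x ⟨hf, hg⟩
  obtain ⟨n, hn⟩ := exists_nat_one_div_lt (lt_min hf (sub_pos.2 hg))
  exact mem_iUnion.2 ⟨n, hn.le.trans (min_le_left _ _),
    by linarith [hn.le.trans (min_le_right _ _)]⟩

lemma integral_mul_indicator_const {α : Type*} [MeasurableSpace α] {μ : Measure α}
    (f : α → ℝ) {s : Set α} (hs : MeasurableSet s) (k : ℝ) :
    ∫ a, f a * s.indicator (fun _ => k) a ∂μ = k * ∫ a in s, f a ∂μ := by
  simp_rw [← indicator_mul_right]
  rw [integral_indicator hs, integral_mul_const, mul_comm]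

lemma Pi.single_apply_mem_of_mem {ι β : Type*} [DecidableEq ι] [Zero β] {S : Set β} {x : β}
    (h0 : 0 ∈ S) (hx : x ∈ S) (i j : ι) : (Pi.single i x : ι → β) j ∈ S := by
  rw [Pi.single_apply]
  split_ifs <;> assumption

section ShiftFlow

variable {P α : Type*} [DecidableEq P]

def shiftFlow (h : P → α → ℝ) (p₀ q : P) (e₂ e₁ : α → ℝ) : P → α → ℝ :=
  h - Pi.single p₀ e₂ + Pi.single q e₁

lemma shiftFlow_apply (h : P → α → ℝ) (p₀ q : P) (e₂ e₁ : α → ℝ) (p : P) (a : α) :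
    shiftFlow h p₀ q e₂ e₁ p a
      = h p a - (Pi.single p₀ e₂ : P → α → ℝ) p a + (Pi.single q e₁ : P → α → ℝ) p a :=
  rfl

section Integral

variable [Fintype P] [MeasurableSpace α] {μ : Measure α} {h : P → α → ℝ} {q p₀ : P}
  {e₁ e₂ : α → ℝ}

lemma sum_integral_shiftFlow {W : Type*} [DecidableEq W] {w : P → W}
    (hh : ∀ p, Integrable (h p) μ) (he₁ : Integrable e₁ μ) (he₂ : Integrable e₂ μ)
    (hq : w q = w p₀) (he : ∫ a, e₁ a ∂μ = ∫ a, e₂ a ∂μ) (ij : W) :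
    ∑ p ∈ Finset.univ.filter (fun p => w p = ij), ∫ a, shiftFlow h p₀ q e₂ e₁ p a ∂μ
      = ∑ p ∈ Finset.univ.filter (fun p => w p = ij), ∫ a, h p a ∂μ := by
  have hint : ∀ {e : α → ℝ} (i p : P), Integrable e μ →
      Integrable ((Pi.single i e : P → α → ℝ) p) μ :=
    fun i p he => Pi.single_apply_mem_of_mem (S := {g | Integrable g μ}) (integrable_zero α ℝ μ)
      he i p
  have hterm : ∀ p, ∫ a, shiftFlow h p₀ q e₂ e₁ p a ∂μ
      = ∫ a, h p a ∂μ - (Pi.single p₀ (∫ a, e₂ a ∂μ) : P → ℝ) p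
        + (Pi.single q (∫ a, e₁ a ∂μ) : P → ℝ) p := by
    intro p
    have hsingle : ∀ (i : P) (e : α → ℝ), ∫ a, (Pi.single i e : P → α → ℝ) p a ∂μ
        = (Pi.single i (∫ a, e a ∂μ) : P → ℝ) p :=
      fun i e => Pi.apply_single (fun _ (g : α → ℝ) => ∫ a, g a ∂μ) (fun _ => integral_zero α ℝ)
        i e p
    have hsub : Integrable (fun a => h p a - (Pi.single p₀ e₂ : P → α → ℝ) p a) μ :=
      (hh p).sub (hint p₀ p he₂)
    simp only [shiftFlow_apply]
    rw [integral_add hsub (hint q p he₁), integral_sub (hh p) (hint p₀ p he₂), hsingle, hsingle]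
  simp only [hterm, Finset.sum_add_distrib, Finset.sum_sub_distrib, Finset.sum_pi_single',
    Finset.mem_filter, Finset.mem_univ, true_and, hq, he, sub_add_cancel]

lemma sum_integral_mul_shiftFlow_sub {c : P → α → ℝ} (hc : ∀ p, MemLp (c p) 2 μ)
    (he₁ : MemLp e₁ 2 μ) (he₂ : MemLp e₂ 2 μ) :
    ∑ p, ∫ a, c p a * (shiftFlow h p₀ q e₂ e₁ p a - h p a) ∂μ
      = ∫ a, c q a * e₁ a ∂μ - ∫ a, c p₀ a * e₂ a ∂μ := by
  have hint : ∀ {e : α → ℝ} (i p : P), MemLp e 2 μ →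
      Integrable (fun a => c p a * (Pi.single i e : P → α → ℝ) p a) μ :=
    fun i p he => (hc p).integrable_mul (Pi.single_apply_mem_of_mem (S := {g | MemLp g 2 μ})
      (MemLp.zero : MemLp (0 : α → ℝ) 2 μ) he i p)
  have hterm : ∀ p, ∫ a, c p a * (shiftFlow h p₀ q e₂ e₁ p a - h p a) ∂μ
      = (Pi.single q (∫ a, c q a * e₁ a ∂μ) : P → ℝ) p
        - (Pi.single p₀ (∫ a, c p₀ a * e₂ a ∂μ) : P → ℝ) p := by
    intro p
    have hshift : ∀ a, c p a * (shiftFlow h p₀ q e₂ e₁ p a - h p a)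
        = c p a * (Pi.single q e₁ : P → α → ℝ) p a
          - c p a * (Pi.single p₀ e₂ : P → α → ℝ) p a :=
      fun a => by rw [shiftFlow_apply]; ring
    simp only [hshift]
    rw [integral_sub (hint q p he₁) (hint p₀ p he₂)]
    exact congrArg₂ (· - ·)
      (Pi.apply_single (fun p (g : α → ℝ) => ∫ a, c p a * g a ∂μ) (fun _ => by simp) q e₁ p)
      (Pi.apply_single (fun p (g : α → ℝ) => ∫ a, c p a * g a ∂μ) (fun _ => by simp) p₀ e₂ p)
  simp [hterm, Finset.sum_sub_distrib]

end Integral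

variable {t0 tf : ℝ} {h : P → ℝ → ℝ} {e e₁ e₂ : ℝ → ℝ}

lemma IsPathFlow.sub_single (hh : IsPathFlow t0 tf h) (p₀ : P) (he : Measurable e)
    (heh : ∀ᵐ t ∂volume.restrict (Icc t0 tf), e t ≤ h p₀ t)
    (heL : MemLp e 2 (volume.restrict (Icc t0 tf))) :
    IsPathFlow t0 tf (h - Pi.single p₀ e) := by
  intro p
  obtain ⟨hm, -, hL⟩ := hh p
  rcases eq_or_ne p p₀ with rfl | hp
  · refine ⟨by simpa using hm.sub he, ?_, by simpa using hL.sub heL⟩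
    filter_upwards [heh] with t ht
    simpa using ht
  · simpa [Pi.single_eq_of_ne hp] using hh p

lemma IsPathFlow.add_single (hh : IsPathFlow t0 tf h) (q : P) (he : Measurable e)
    (he0 : ∀ᵐ t ∂volume.restrict (Icc t0 tf), 0 ≤ e t)
    (heL : MemLp e 2 (volume.restrict (Icc t0 tf))) :
    IsPathFlow t0 tf (h + Pi.single q e) := by
  intro p
  obtain ⟨hm, h0, hL⟩ := hh p
  rcases eq_or_ne p q with rfl | hp
  · refine ⟨by simpa using hm.add he, ?_, by simpa using hL.add heL⟩
    filter_upwards [h0, he0] with t h1 h2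
    simpa using add_nonneg h1 h2
  · simpa [Pi.single_eq_of_ne hp] using hh p

lemma IsPathFlow.shiftFlow (hh : IsPathFlow t0 tf h) (p₀ q : P) (he₂ : Measurable e₂)
    (he₂h : ∀ᵐ t ∂volume.restrict (Icc t0 tf), e₂ t ≤ h p₀ t)
    (he₂L : MemLp e₂ 2 (volume.restrict (Icc t0 tf))) (he₁ : Measurable e₁)
    (he₁0 : ∀ᵐ t ∂volume.restrict (Icc t0 tf), 0 ≤ e₁ t)
    (he₁L : MemLp e₁ 2 (volume.restrict (Icc t0 tf))) :
    IsPathFlow t0 tf (shiftFlow h p₀ q e₂ e₁) :=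
  (hh.sub_single p₀ he₂ he₂h he₂L).add_single q he₁ he₁0 he₁L

end ShiftFlow

section VariationalInequality

variable {P W : Type*} [Fintype P] [DecidableEq W] (t0 tf : ℝ) (w : P → W) (Q : W → ℝ)

def MeetsDemand (h : P → ℝ → ℝ) : Prop :=
  ∀ ij, ∑ p ∈ Finset.univ.filter (fun p => w p = ij), ∫ t in Icc t0 tf, h p t = Q ij

def SolvesVI (c hstar : P → ℝ → ℝ) : Prop :=
  ∀ h : P → ℝ → ℝ, IsPathFlow t0 tf h → MeetsDemand t0 tf w Q h →
    0 ≤ ∑ p, ∫ t in Icc t0 tf, c p t * (h p t - hstar p t)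

variable {t0 tf w Q} {c hstar : P → ℝ → ℝ}

theorem vi_of_due (hc : ∀ p, MemLp (c p) 2 (volume.restrict (Icc t0 tf)))
    (hflow : IsPathFlow t0 tf hstar) (hdem : MeetsDemand t0 tf w Q hstar)
    (hcompl : ∀ p, ∀ᵐ t ∂volume.restrict (Icc t0 tf),
      0 < hstar p t → c p t = vMin t0 tf w c (w p))
    (hmin : ∀ p, ∀ᵐ t ∂volume.restrict (Icc t0 tf), vMin t0 tf w c (w p) ≤ c p t) :
    SolvesVI t0 tf w Q c hstar := fun h hh hhdem =>
  calc (0 : ℝ)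
      = ∑ p, vMin t0 tf w c (w p) * ((∫ t in Icc t0 tf, h p t) - ∫ t in Icc t0 tf, hstar p t) :=
        (Finset.sum_comp_mul_sub_eq_zero w _ fun ij => (hhdem ij).trans (hdem ij).symm).symm
    _ ≤ _ := Finset.sum_le_sum fun p _ =>
        mul_sub_integral_le_integral_mul_sub (hc p) (hh p).2.2 (hflow p).2.2 (hmin p)
          (hh p).2.1 (hflow p).2.1 (hcompl p)

theorem integral_mul_le_of_vi [DecidableEq P]
    (hvi : SolvesVI t0 tf w Q c hstar)
    (hc : ∀ p, MemLp (c p) 2 (volume.restrict (Icc t0 tf))) (hflow : IsPathFlow t0 tf hstar)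
    (hdem : MeetsDemand t0 tf w Q hstar)
    {p₀ q : P} (hq : w q = w p₀) {e₁ e₂ : ℝ → ℝ} (he₂ : Measurable e₂)
    (he₂h : ∀ᵐ t ∂volume.restrict (Icc t0 tf), e₂ t ≤ hstar p₀ t)
    (he₂L : MemLp e₂ 2 (volume.restrict (Icc t0 tf))) (he₁ : Measurable e₁)
    (he₁0 : ∀ᵐ t ∂volume.restrict (Icc t0 tf), 0 ≤ e₁ t)
    (he₁L : MemLp e₁ 2 (volume.restrict (Icc t0 tf)))
    (he : ∫ t in Icc t0 tf, e₁ t = ∫ t in Icc t0 tf, e₂ t) :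
    ∫ t in Icc t0 tf, c p₀ t * e₂ t ≤ ∫ t in Icc t0 tf, c q t * e₁ t := by
  have hsum := hvi _ (hflow.shiftFlow p₀ q he₂ he₂h he₂L he₁ he₁0 he₁L) fun ij =>
    (sum_integral_shiftFlow (fun p => (hflow p).2.2.integrable one_le_two)
      (he₁L.integrable one_le_two) (he₂L.integrable one_le_two) hq he ij).trans (hdem ij)
  rw [sum_integral_mul_shiftFlow_sub hc he₁L he₂L] at hsum
  linarith

theorem setAverage_le_of_vi [DecidableEq P]
    (hvi : SolvesVI t0 tf w Q c hstar)
    (hc : ∀ p, MemLp (c p) 2 (volume.restrict (Icc t0 tf))) (hflow : IsPathFlow t0 tf hstar)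
    (hdem : MeetsDemand t0 tf w Q hstar)
    {p₀ q : P} (hq : w q = w p₀) {A B : Set ℝ} (hAm : MeasurableSet A) (hBm : MeasurableSet B)
    (hA : volume.restrict (Icc t0 tf) A ≠ 0) (hB : volume.restrict (Icc t0 tf) B ≠ 0)
    {r : ℝ} (hr : 0 < r) (hAr : ∀ᵐ t ∂volume.restrict (Icc t0 tf), t ∈ A → r ≤ hstar p₀ t) :
    ⨍ t in A, c p₀ t ∂volume.restrict (Icc t0 tf) ≤ ⨍ t in B, c q t ∂volume.restrict (Icc t0 tf) := by
  set μ := volume.restrict (Icc t0 tf)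
  have hApos : 0 < μ.real A := ENNReal.toReal_pos hA (measure_ne_top μ A)
  have hBpos : 0 < μ.real B := ENNReal.toReal_pos hB (measure_ne_top μ B)
  set k := r * μ.real A / μ.real B
  have hk : 0 < k := by positivity
  have htransfer := integral_mul_le_of_vi hvi hc hflow hdem hq (e₂ := A.indicator fun _ => r)
    (e₁ := B.indicator fun _ => k) (measurable_const.indicator hAm) ?_
    (memLp_indicator_const 2 hAm r (Or.inr (measure_ne_top μ A)))
    (measurable_const.indicator hBm) (ae_of_all _ fun t => indicator_nonneg (fun _ _ => hk.le) t)
    (memLp_indicator_const 2 hBm k (Or.inr (measure_ne_top μ B))) ?_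
  · rw [integral_mul_indicator_const _ hAm, integral_mul_indicator_const _ hBm] at htransfer
    rw [setAverage_eq, setAverage_eq, smul_eq_mul, smul_eq_mul, inv_mul_le_iff₀ hApos]
    refine le_of_mul_le_mul_left (htransfer.trans_eq ?_) hr
    simp only [k]
    ring
  · filter_upwards [hAr, (hflow p₀).2.1] with t hAt h0
    exact indicator_apply_le' hAt fun _ => h0
  · rw [integral_indicator_const _ hBm, integral_indicator_const _ hAm, smul_eq_mul, smul_eq_mul]
    change μ.real B * (r * μ.real A / μ.real B) = μ.real A * r
    field_simp

theorem ae_eq_vMin_of_vi (ht : t0 < tf)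
    (hvi : SolvesVI t0 tf w Q c hstar)
    (hcm : ∀ p, Measurable (c p)) (hc : ∀ p, MemLp (c p) 2 (volume.restrict (Icc t0 tf)))
    (hmin : ∀ p, ∀ᵐ t ∂volume.restrict (Icc t0 tf), vMin t0 tf w c (w p) ≤ c p t)
    (hflow : IsPathFlow t0 tf hstar)
    (hdem : MeetsDemand t0 tf w Q hstar) (p₀ : P) :
    ∀ᵐ t ∂volume.restrict (Icc t0 tf), 0 < hstar p₀ t → c p₀ t = vMin t0 tf w c (w p₀) := by
  classical
  set μ := volume.restrict (Icc t0 tf)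
  set v := vMin t0 tf w c (w p₀)
  by_contra hne
  have hE : μ {t | 0 < hstar p₀ t ∧ v < c p₀ t} ≠ 0 := fun h0 => hne <| by
    filter_upwards [hmin p₀, measure_eq_zero_iff_ae_notMem.1 h0] with t hvc hnot hpos
    exact (hvc.eq_or_lt.resolve_right fun hlt => hnot ⟨hpos, hlt⟩).symm
  obtain ⟨r, hr, hA⟩ := exists_measure_setOf_le_and_add_le_ne_zero hE
  obtain ⟨q, hq, hqv⟩ := exists_essinfOn_eq_vMin w c p₀
  set A := {t | r ≤ hstar p₀ t ∧ v + r ≤ c p₀ t}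
  set B := {t | c q t < v + r}
  have hB : μ B ≠ 0 := measure_lt_ne_zero_of_essinfOn_lt ht (by rw [hqv]; linarith)
  have hAm : MeasurableSet A := (measurableSet_le measurable_const (hflow p₀).1).inter
    (measurableSet_le measurable_const (hcm p₀))
  have hBm : MeasurableSet B := measurableSet_lt (hcm q) measurable_const
  have havg := setAverage_le_of_vi hvi hc hflow hdem hq hAm hBm hA hB hr
    (ae_of_all _ fun _ htA => htA.1)
  obtain ⟨x, hxA, hx⟩ := exists_le_setAverage hA (measure_ne_top μ A)
    ((hc p₀).integrable one_le_two).integrableOn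
  obtain ⟨y, hyB, hy⟩ := exists_setAverage_le hB (measure_ne_top μ B)
    ((hc q).integrable one_le_two).integrableOn
  linarith [hxA.2, show c q y < v + r from hyB]

end VariationalInequality

theorem fixed_demand_due_iff_vi_general {P W : Type*} [Fintype P]
    [DecidableEq W]
    (t0 tf : ℝ) (ht : t0 < tf) (w : P → W)
    (Ψ : (P → ℝ → ℝ) → P → ℝ → ℝ)
    (hΨ : ∀ h : P → ℝ → ℝ, IsPathFlow t0 tf h → ∀ p,
      Measurable (Ψ h p) ∧ (∀ t ∈ Icc t0 tf, 0 < Ψ h p t) ∧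
      MemLp (Ψ h p) 2 (volume.restrict (Icc t0 tf)))
    (Q : W → ℝ)
    (hstar : P → ℝ → ℝ) (hflow : IsPathFlow t0 tf hstar)
    (hdem : ∀ ij, (∑ p ∈ Finset.univ.filter (fun p => w p = ij),
      ∫ t in Icc t0 tf, hstar p t) = Q ij) :
    ((∀ p, (∀ᵐ t ∂(volume.restrict (Icc t0 tf)),
        0 < hstar p t → Ψ hstar p t = vMin t0 tf w (Ψ hstar) (w p)) ∧
      (∀ᵐ t ∂(volume.restrict (Icc t0 tf)),
        vMin t0 tf w (Ψ hstar) (w p) ≤ Ψ hstar p t)) ↔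
      (∀ h : P → ℝ → ℝ, IsPathFlow t0 tf h →
        (∀ ij, (∑ p ∈ Finset.univ.filter (fun p => w p = ij),
          ∫ t in Icc t0 tf, h p t) = Q ij) →
        0 ≤ ∑ p, ∫ t in Icc t0 tf, Ψ hstar p t * (h p t - hstar p t))) := by
  have hcm p : Measurable (Ψ hstar p) := (hΨ hstar hflow p).1
  have hcL p : MemLp (Ψ hstar p) 2 (volume.restrict (Icc t0 tf)) := (hΨ hstar hflow p).2.2
  have hmin := ae_vMin_le w (Ψ hstar) fun p =>
    ae_restrict_of_forall_mem measurableSet_Icc fun t ht => ((hΨ hstar hflow p).2.1 t ht).le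
  constructor
  · intro hdue
    exact vi_of_due hcL hflow hdem (fun p => (hdue p).1) (fun p => (hdue p).2)
  · intro hvi p
    exact ⟨ae_eq_vMin_of_vi ht hvi hcm hcL hmin hflow hdem p, hmin p⟩

/-- **Fixed-demand DUE/VI equivalence (Friesz et al., 1993)**: with fixed positive
demands `Q`, a feasible path-flow vector `h*` is a dynamic user equilibrium if and
only if it solves the fixed-demand variational inequality. -/
theorem fixed_demand_due_iff_vi {P W : Type*} [Fintype P] [Nonempty P] [Fintype W]
    [DecidableEq W]
    (t0 tf : ℝ) (ht : t0 < tf) (w : P → W) (hw : Function.Surjective w)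
    (Ψ : (P → ℝ → ℝ) → P → ℝ → ℝ)
    (hΨ : ∀ h : P → ℝ → ℝ, IsPathFlow t0 tf h → ∀ p,
      Measurable (Ψ h p) ∧ (∀ t ∈ Icc t0 tf, 0 < Ψ h p t) ∧
      MemLp (Ψ h p) 2 (volume.restrict (Icc t0 tf)))
    (Q : W → ℝ) (hQ : ∀ ij, 0 < Q ij)
    (hstar : P → ℝ → ℝ) (hflow : IsPathFlow t0 tf hstar)
    (hdem : ∀ ij, (∑ p ∈ Finset.univ.filter (fun p => w p = ij),
      ∫ t in Icc t0 tf, hstar p t) = Q ij) :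
    ((∀ p, (∀ᵐ t ∂(volume.restrict (Icc t0 tf)),
        0 < hstar p t → Ψ hstar p t = vMin t0 tf w (Ψ hstar) (w p)) ∧
      (∀ᵐ t ∂(volume.restrict (Icc t0 tf)),
        vMin t0 tf w (Ψ hstar) (w p) ≤ Ψ hstar p t)) ↔
      (∀ h : P → ℝ → ℝ, IsPathFlow t0 tf h →
        (∀ ij, (∑ p ∈ Finset.univ.filter (fun p => w p = ij),
          ∫ t in Icc t0 tf, h p t) = Q ij) →
        0 ≤ ∑ p, ∫ t in Icc t0 tf, Ψ hstar p t * (h p t - hstar p t))) :=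
  fixed_demand_due_iff_vi_general t0 tf ht w Ψ hΨ Q hstar hflow hdem
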